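/- arXiv:1512.05983 — 2 statements merged into one kernel-verified Lean document; each statement's English description precedes it below -/
import Mathlib

section
/- The operator 𝒜 : L²([0,T),ℂ) → L²(ℝ₊,ℂ), defined by (𝒜f)(x) = e^{-λx} f(cut(x)) where cut(x) = x - T⌊x/T⌋ and λ > 0, is a bounded linear operator satisfying (e^{-2Tλ}/(1 - e^{-2Tλ}))·‖f‖₂² ≤ ‖𝒜f‖₂² ≤ (1/(1 - e^{-2Tλ}))·‖f‖₂² for every f ∈ L²([0,T),ℂ). -/
/-!
Since `cut` is `T`-periodic, `𝒜 f (x + T) = e^{-λT} 𝒜 f x`, so `‖𝒜 f‖²` gets multiplied by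
`r = e^{-2Tλ}` on each successive period `[nT, (n+1)T)`. Summing the geometric series gives
`‖𝒜 f‖₂² = (1 - r)⁻¹ ∫₀ᵀ ‖𝒜 f‖²`, and on `[0, T)` the weight `e^{-2λx}` lies in `[r, 1]`.
-/

open MeasureTheory

/-- `cut T x = x mod T`. -/
noncomputable def cut (T x : ℝ) : ℝ := x - T * ⌊x / T⌋

/-- The operator `𝒜`, `(𝒜 f)(x) = e^{-λ x} f(cut x)`. -/
noncomputable def Aop (T lm : ℝ) (f : ℝ → ℂ) : ℝ → ℂ :=
  fun x => Real.exp (-lm * x) • f (cut T x)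

open Set Function

theorem iUnion_Ico_nat_mul {T : ℝ} (hT : 0 < T) :
    ⋃ n : ℕ, Ico (n * T) ((n + 1) * T) = Ici 0 := by
  ext x
  simp only [mem_iUnion, mem_Ico, mem_Ici]
  constructor
  · rintro ⟨n, hn, -⟩
    exact (by positivity : (0 : ℝ) ≤ n * T).trans hn
  · intro hx
    refine ⟨⌊x / T⌋₊, ?_, ?_⟩
    · exact (le_div_iff₀ hT).mp (Nat.floor_le (by positivity))
    · exact (div_lt_iff₀ hT).mp (Nat.lt_floor_add_one _)

theorem pairwise_disjoint_Ico_nat_mul (T : ℝ) :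
    Pairwise (Disjoint on fun n : ℕ => Ico (n * T) ((n + 1) * T)) := by
  intro m n hmn
  simpa [onFun, zsmul_eq_mul] using
    pairwise_disjoint_Ico_add_zsmul (0 : ℝ) T (Nat.cast_injective.ne hmn : (m : ℤ) ≠ n)

theorem integrableOn_Ico_add_const_iff {E : Type*} [NormedAddCommGroup E] {F : ℝ → E}
    (a b c : ℝ) :
    IntegrableOn F (Ico (a + c) (b + c)) ↔ IntegrableOn (fun x => F (x + c)) (Ico a b) := by
  rw [← image_add_const_Ico]
  exact (measurePreserving_add_right volume c).integrableOn_image (measurableEmbedding_addRight c)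

theorem setIntegral_Ico_add_const {E : Type*} [NormedAddCommGroup E] [NormedSpace ℝ E]
    (F : ℝ → E) (a b c : ℝ) :
    ∫ x in Ico (a + c) (b + c), F x = ∫ x in Ico a b, F (x + c) := by
  rw [← image_add_const_Ico]
  exact (measurePreserving_add_right volume c).setIntegral_image_emb
    (measurableEmbedding_addRight c) F _

section QuasiPeriodic

variable {E : Type*} [NormedAddCommGroup E] [NormedSpace ℝ E] {F : ℝ → E} {T r : ℝ}

theorem add_nat_mul_eq_pow_smul (hF : ∀ x, F (x + T) = r • F x) (n : ℕ) (x : ℝ) :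
    F (x + n * T) = r ^ n • F x := by
  induction n with
  | zero => simp
  | succ n ih =>
    rw [Nat.cast_succ, add_one_mul, ← add_assoc, hF, ih, smul_smul, pow_succ']

theorem integrableOn_Ico_nat_mul_of_add_eq_smul (hF : ∀ x, F (x + T) = r • F x)
    (hint : IntegrableOn F (Ico 0 T)) (n : ℕ) :
    IntegrableOn F (Ico (n * T) ((n + 1) * T)) := by
  have h := integrableOn_Ico_add_const_iff (F := F) 0 T (n * T)
  rw [zero_add, ← one_add_mul, add_comm 1] at h
  rw [h]
  simp only [add_nat_mul_eq_pow_smul hF]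
  exact hint.smul (r ^ n)

theorem setIntegral_Ico_nat_mul_of_add_eq_smul (hF : ∀ x, F (x + T) = r • F x) (n : ℕ) :
    ∫ x in Ico (n * T) ((n + 1) * T), F x = r ^ n • ∫ x in Ico 0 T, F x := by
  have h := setIntegral_Ico_add_const F 0 T (n * T)
  rw [zero_add, ← one_add_mul, add_comm 1] at h
  simp only [h, add_nat_mul_eq_pow_smul hF, integral_smul]

theorem integral_Ici_of_add_eq_smul [CompleteSpace E] (hT : 0 < T) (hr₀ : 0 ≤ r) (hr₁ : r < 1)
    (hF : ∀ x, F (x + T) = r • F x) (hint : IntegrableOn F (Ico 0 T)) :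
    ∫ x in Ici 0, F x = (1 - r)⁻¹ • ∫ x in Ico 0 T, F x := by
  have hnorm : ∀ x, ‖F (x + T)‖ = r • ‖F x‖ := fun x => by
    rw [hF, norm_smul, Real.norm_of_nonneg hr₀, smul_eq_mul]
  have hint_Ici : IntegrableOn F (Ici 0) := by
    rw [← iUnion_Ico_nat_mul hT]
    refine integrableOn_iUnion_of_summable_integral_norm
      (integrableOn_Ico_nat_mul_of_add_eq_smul hF hint) ?_
    simp only [setIntegral_Ico_nat_mul_of_add_eq_smul (F := fun x => ‖F x‖) hnorm, smul_eq_mul]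
    exact (summable_geometric_of_lt_one hr₀ hr₁).mul_right _
  have hsum := hasSum_integral_iUnion (fun n => measurableSet_Ico)
    (pairwise_disjoint_Ico_nat_mul T) (iUnion_Ico_nat_mul hT ▸ hint_Ici)
  rw [iUnion_Ico_nat_mul hT] at hsum
  simp only [setIntegral_Ico_nat_mul_of_add_eq_smul hF] at hsum
  exact hsum.unique ((hasSum_geometric_of_lt_one hr₀ hr₁).smul_const _)

end QuasiPeriodic

theorem cut_add_self {T : ℝ} (hT : T ≠ 0) (x : ℝ) : cut T (x + T) = cut T x := by
  rw [cut, cut, add_div, div_self hT, Int.floor_add_one]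
  push_cast
  ring

theorem cut_of_mem_Ico {T x : ℝ} (hx : x ∈ Ico 0 T) : cut T x = x := by
  have hT : 0 < T := hx.1.trans_lt hx.2
  have h : ⌊x / T⌋ = 0 := Int.floor_eq_zero_iff.mpr
    ⟨div_nonneg hx.1 hT.le, (div_lt_one hT).mpr hx.2⟩
  simp [cut, h]

theorem Aop_add_self {T : ℝ} (hT : T ≠ 0) (lm : ℝ) (f : ℝ → ℂ) (x : ℝ) :
    Aop T lm f (x + T) = Real.exp (-lm * T) • Aop T lm f x := by
  rw [Aop, Aop, cut_add_self hT, smul_smul, ← Real.exp_add]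
  congr 2
  ring

theorem norm_Aop_sq (T lm : ℝ) (f : ℝ → ℂ) (x : ℝ) :
    ‖Aop T lm f x‖ ^ 2 = Real.exp (-2 * lm * x) * ‖f (cut T x)‖ ^ 2 := by
  rw [Aop, norm_smul, mul_pow, Real.norm_of_nonneg (Real.exp_pos _).le, ← Real.exp_nat_mul]
  congr 2
  push_cast
  ring

theorem norm_Aop_sq_add_self {T : ℝ} (hT : T ≠ 0) (lm : ℝ) (f : ℝ → ℂ) (x : ℝ) :
    ‖Aop T lm f (x + T)‖ ^ 2 = Real.exp (-2 * T * lm) * ‖Aop T lm f x‖ ^ 2 := by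
  have hsq : Real.exp (-lm * T) ^ 2 = Real.exp (-2 * T * lm) := by
    rw [← Real.exp_nat_mul]
    ring_nf
  rw [Aop_add_self hT, norm_smul, mul_pow, Real.norm_of_nonneg (Real.exp_pos _).le, hsq]

theorem exp_neg_two_mul_mem_Icc {T lm x : ℝ} (hl : 0 ≤ lm) (hx : x ∈ Ico 0 T) :
    Real.exp (-2 * lm * x) ∈ Icc (Real.exp (-2 * T * lm)) 1 :=
  ⟨Real.exp_le_exp.mpr (by nlinarith [hx.2]), Real.exp_le_one_iff.mpr (by nlinarith [hx.1])⟩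

theorem integrableOn_norm_Aop_sq {T lm : ℝ} (hl : 0 ≤ lm) {f : ℝ → ℂ}
    (hf : IntegrableOn (fun x => ‖f x‖ ^ 2) (Ico 0 T)) :
    IntegrableOn (fun x => ‖Aop T lm f x‖ ^ 2) (Ico 0 T) := by
  have heq : EqOn (fun x => ‖Aop T lm f x‖ ^ 2)
      (fun x => Real.exp (-2 * lm * x) * ‖f x‖ ^ 2) (Ico 0 T) := fun x hx => by
    simp only [norm_Aop_sq, cut_of_mem_Ico hx]
  rw [integrableOn_congr_fun heq measurableSet_Ico]
  refine hf.bdd_mul (c := 1) (by fun_prop) ?_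
  filter_upwards [ae_restrict_mem measurableSet_Ico] with x hx
  rw [Real.norm_of_nonneg (Real.exp_pos _).le]
  exact (exp_neg_two_mul_mem_Icc hl hx).2

/-- `𝒜` is a bounded linear operator with the two-sided norm bound. -/
theorem stmt_0 (T lm : ℝ) (hT : 0 < T) (hl : 0 < lm)
    (f : ℝ → ℂ)
    (hf : IntegrableOn (fun x => ‖f x‖ ^ 2) (Set.Ico 0 T)) :
    -- linearity of 𝒜
    (∀ (c : ℂ) (g : ℝ → ℂ),
      Aop T lm (fun x => c • f x + g x) = fun x => c • Aop T lm f x + Aop T lm g x) ∧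
    -- lower bound
    (Real.exp (-2 * T * lm) / (1 - Real.exp (-2 * T * lm))) *
        (∫ x in Set.Ico 0 T, ‖f x‖ ^ 2)
      ≤ (∫ x in Set.Ici (0:ℝ), ‖Aop T lm f x‖ ^ 2) ∧
    -- upper bound (in particular 𝒜 is bounded)
    (∫ x in Set.Ici (0:ℝ), ‖Aop T lm f x‖ ^ 2)
      ≤ (1 / (1 - Real.exp (-2 * T * lm))) * (∫ x in Set.Ico 0 T, ‖f x‖ ^ 2) := by
  set r := Real.exp (-2 * T * lm)
  have hr₁ : r < 1 := Real.exp_lt_one_iff.mpr (by nlinarith)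
  have hint := integrableOn_norm_Aop_sq hl.le hf
  have hweight : ∀ x ∈ Ico 0 T, r * ‖f x‖ ^ 2 ≤ ‖Aop T lm f x‖ ^ 2 ∧
      ‖Aop T lm f x‖ ^ 2 ≤ ‖f x‖ ^ 2 := fun x hx => by
    obtain ⟨hr, h1⟩ := exp_neg_two_mul_mem_Icc hl.le hx
    rw [norm_Aop_sq, cut_of_mem_Ico hx]
    exact ⟨by gcongr, mul_le_of_le_one_left (by positivity) h1⟩
  have hlower : r * ∫ x in Ico 0 T, ‖f x‖ ^ 2 ≤ ∫ x in Ico 0 T, ‖Aop T lm f x‖ ^ 2 := by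
    rw [← integral_const_mul]
    exact setIntegral_mono_on (hf.const_mul r) hint measurableSet_Ico fun x hx => (hweight x hx).1
  have hupper : ∫ x in Ico 0 T, ‖Aop T lm f x‖ ^ 2 ≤ ∫ x in Ico 0 T, ‖f x‖ ^ 2 :=
    setIntegral_mono_on hint hf measurableSet_Ico fun x hx => (hweight x hx).2
  have hval := integral_Ici_of_add_eq_smul hT (Real.exp_pos _).le hr₁
    (norm_Aop_sq_add_self hT.ne' lm f) hint
  refine ⟨fun c g => ?_, ?_, ?_⟩
  · funext x
    simp only [Aop, smul_add, smul_comm _ c]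
  · rw [hval, smul_eq_mul, div_eq_inv_mul, mul_assoc]
    gcongr
  · rw [hval, smul_eq_mul, one_div]
    gcongr
end

section
/- The map 𝒫_𝒜 := 𝒜 ∘ M_λ ∘ 𝒞, where M_λ f(x) = e^{λx} f(x) on [0,T) and 𝒞 is the restriction map L²(ℝ₊,ℂ) → L²([0,T),ℂ), is a continuous linear projection (𝒫_𝒜² = 𝒫_𝒜) with range ran(𝒜), kernel F = {f ∈ L²(ℝ₊,ℂ) : f = 0 a.e. on [0,T)}, operator norm equal to (1 − e^{-2λT})^{-1/2}, and 𝒫_𝒜 f(x) = f(x) for a.e. x ∈ [0,T]. -/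
open MeasureTheory

/-- The projection `𝒫_𝒜 = 𝒜 ∘ M_λ ∘ 𝒞`, where `M_λ` is multiplication by `e^{λx}`
on `[0,T)` and `𝒞` is restriction to `[0,T)`; explicitly
`(𝒫_𝒜 f)(x) = e^{-λx} e^{λ cut(x)} f(cut(x))`. -/
noncomputable def Pop (T lm : ℝ) (f : ℝ → ℂ) : ℝ → ℂ :=
  Aop T lm (fun y => Real.exp (lm * y) • f y)

/-!
On the block `[kT, (k+1)T)` the map `cut T` is translation by `-kT`, so
`(𝒫_𝒜 f)(x + kT) = e^{-λkT} (𝒫_𝒜 f)(x)`, while `𝒫_𝒜 f = f` on `[0,T)`. As measures, Lebesgue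
measure on `[0,∞)` is the sum over `k` of the translates by `kT` of Lebesgue measure on `[0,T)`;
hence `‖𝒫_𝒜 f‖² = ∑ₖ e^{-2λkT} ‖f‖²_{[0,T)} = (1 - e^{-2λT})⁻¹ ‖f‖²_{[0,T)}`, which gives the norm
bound and its attainment, and `cut T` pulls null sets of `[0,T)` back to null sets of `[0,∞)`,
which identifies the kernel.
-/

open Set

section Cut

variable {T : ℝ}

theorem cut_eq_toIcoMod (hT : 0 < T) (x : ℝ) : cut T x = toIcoMod hT 0 x := by
  rw [toIcoMod_eq_fract_mul, cut, Int.fract]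
  field_simp

theorem cut_mem_Ico (hT : 0 < T) (x : ℝ) : cut T x ∈ Ico 0 T := by
  simpa [cut_eq_toIcoMod hT] using toIcoMod_mem_Ico' hT x

theorem cut_eq_self (hT : 0 < T) {x : ℝ} (hx : x ∈ Ico 0 T) : cut T x = x := by
  rw [cut_eq_toIcoMod hT, toIcoMod_eq_self]
  simpa using hx

theorem cut_cut (hT : 0 < T) (x : ℝ) : cut T (cut T x) = cut T x :=
  cut_eq_self hT (cut_mem_Ico hT x)

theorem cut_add_natCast_mul (hT : 0 < T) (x : ℝ) (k : ℕ) : cut T (x + k * T) = cut T x := by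
  simp only [cut_eq_toIcoMod hT, toIcoMod_add_natCast_mul]

@[fun_prop]
theorem measurable_cut (T : ℝ) : Measurable (cut T) := by
  unfold cut
  fun_prop

end Cut

section Periodization

variable {T : ℝ}

theorem volume_restrict_Ici_eq_sum_map (hT : 0 < T) :
    volume.restrict (Ici (0 : ℝ)) =
      Measure.sum fun k : ℕ => (volume.restrict (Ico 0 T)).map (· + k * T) := by
  have hmono : Monotone fun k : ℕ => (k : ℝ) * T :=
    fun a b h => mul_le_mul_of_nonneg_right (Nat.cast_le.2 h) hT.le
  have hunbdd : ¬BddAbove (range fun k : ℕ => (k : ℝ) * T) :=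
    Filter.not_bddAbove_of_tendsto_atTop (tendsto_natCast_atTop_atTop.atTop_mul_const hT)
  have hcover := iUnion_Ico_map_succ_eq_Ici (fun k => hmono (Nat.zero_le k)) hunbdd
  simp only [Nat.bot_eq_zero, CharP.cast_eq_zero, zero_mul] at hcover
  rw [← hcover, Measure.restrict_iUnion hmono.pairwise_disjoint_on_Ico_succ
    fun _ => measurableSet_Ico]
  congr 1
  funext k
  have hpre : (· + (k : ℝ) * T) ⁻¹' Ico (k * T) (Order.succ k * T) = Ico 0 T := by
    rw [preimage_add_const_Ico, Order.succ_eq_add_one]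
    push_cast
    ring_nf
  rw [← hpre,
    ((measurePreserving_add_right volume _).restrict_preimage measurableSet_Ico).map_eq]

theorem lintegral_Ici_eq_tsum (hT : 0 < T) (g : ℝ → ENNReal) :
    ∫⁻ x in Ici 0, g x = ∑' k : ℕ, ∫⁻ y in Ico 0 T, g (y + k * T) := by
  rw [volume_restrict_Ici_eq_sum_map hT, lintegral_sum_measure]
  exact tsum_congr fun k => (MeasurableEquiv.addRight _).measurableEmbedding.lintegral_map g

theorem quasiMeasurePreserving_cut (hT : 0 < T) :
    Measure.QuasiMeasurePreserving (cut T) (volume.restrict (Ici 0))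
      (volume.restrict (Ico 0 T)) where
  measurable := measurable_cut T
  absolutelyContinuous := by
    rw [volume_restrict_Ici_eq_sum_map hT, Measure.map_sum (measurable_cut T).aemeasurable]
    refine Measure.absolutelyContinuous_sum_left fun k => ?_
    have hcut : cut T ∘ (· + k * T) =ᵐ[volume.restrict (Ico 0 T)] id := by
      filter_upwards [ae_restrict_mem measurableSet_Ico] with y hy
      simp [cut_add_natCast_mul hT, cut_eq_self hT hy]
    rw [Measure.map_map (measurable_cut T) (measurable_add_const _), Measure.map_congr hcut,
      Measure.map_id]

end Periodization

section Projection

variable {T lm : ℝ}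

theorem Pop_apply (f : ℝ → ℂ) (x : ℝ) :
    Pop T lm f x = Real.exp (-lm * (x - cut T x)) • f (cut T x) := by
  simp only [Pop, Aop, smul_smul, ← Real.exp_add]
  ring_nf

theorem Pop_eq_self_of_mem (hT : 0 < T) (f : ℝ → ℂ) {x : ℝ} (hx : x ∈ Ico 0 T) :
    Pop T lm f x = f x := by
  simp [Pop_apply, cut_eq_self hT hx]

theorem Pop_Aop (hT : 0 < T) (f : ℝ → ℂ) (x : ℝ) : Pop T lm (Aop T lm f) x = Aop T lm f x := by
  simp only [Pop_apply, Aop, cut_cut hT, smul_smul, ← Real.exp_add]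
  ring_nf

theorem Pop_Pop (hT : 0 < T) (f : ℝ → ℂ) (x : ℝ) : Pop T lm (Pop T lm f) x = Pop T lm f x :=
  Pop_Aop hT _ x

theorem Pop_add_natCast_mul (hT : 0 < T) (f : ℝ → ℂ) (x : ℝ) (k : ℕ) :
    Pop T lm f (x + k * T) = Real.exp (-lm * (k * T)) • Pop T lm f x := by
  simp only [Pop_apply, cut_add_natCast_mul hT, smul_smul, ← Real.exp_add]
  ring_nf

theorem Pop_ae_eq_zero_iff (hT : 0 < T) (f : ℝ → ℂ) :
    Pop T lm f =ᵐ[volume.restrict (Ici 0)] 0 ↔ f =ᵐ[volume.restrict (Ico 0 T)] 0 := by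
  constructor
  · intro h
    filter_upwards [ae_restrict_of_ae_restrict_of_subset Ico_subset_Ici_self h,
      ae_restrict_mem measurableSet_Ico] with x hx hmem
    rwa [← Pop_eq_self_of_mem hT f hmem]
  · intro h
    filter_upwards [(quasiMeasurePreserving_cut hT).ae h] with x hx
    simp [Pop_apply, hx]

theorem lintegral_ofReal_norm_Pop_sq (hT : 0 < T) (f : ℝ → ℂ) :
    ∫⁻ x in Ici 0, ENNReal.ofReal (‖Pop T lm f x‖ ^ 2) =
      (1 - ENNReal.ofReal (Real.exp (-2 * lm * T)))⁻¹ *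
        ∫⁻ x in Ico 0 T, ENNReal.ofReal (‖f x‖ ^ 2) := by
  have hblock (k : ℕ) : ∫⁻ y in Ico 0 T, ENNReal.ofReal (‖Pop T lm f (y + k * T)‖ ^ 2) =
      ENNReal.ofReal (Real.exp (-2 * lm * T)) ^ k *
        ∫⁻ y in Ico 0 T, ENNReal.ofReal (‖f y‖ ^ 2) := by
    have hexp : Real.exp (-lm * (k * T)) ^ 2 = Real.exp (-2 * lm * T) ^ k := by
      rw [← Real.exp_nat_mul, ← Real.exp_nat_mul]
      ring_nf
    rw [← lintegral_const_mul' _ _ (by simp)]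
    refine setLIntegral_congr_fun measurableSet_Ico fun y hy => ?_
    rw [Pop_add_natCast_mul hT, Pop_eq_self_of_mem hT f hy, norm_smul,
      Real.norm_of_nonneg (Real.exp_nonneg _), mul_pow, hexp,
      ENNReal.ofReal_mul (by positivity), ENNReal.ofReal_pow (Real.exp_nonneg _)]
  simp_rw [lintegral_Ici_eq_tsum hT, hblock, ENNReal.tsum_mul_right, ENNReal.tsum_geometric]

theorem exp_neg_two_mul_lt_one (hT : 0 < T) (hl : 0 < lm) : Real.exp (-2 * lm * T) < 1 :=
  Real.exp_lt_one_iff.2 (by nlinarith)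

theorem integral_norm_Pop_sq (hT : 0 < T) (hl : 0 < lm) {f : ℝ → ℂ}
    (hf : AEStronglyMeasurable (fun x => ‖f x‖ ^ 2) (volume.restrict (Ico 0 T))) :
    ∫ x in Ici 0, ‖Pop T lm f x‖ ^ 2 =
      1 / (1 - Real.exp (-2 * lm * T)) * ∫ x in Ico 0 T, ‖f x‖ ^ 2 := by
  have hPop : AEStronglyMeasurable (fun x => ‖Pop T lm f x‖ ^ 2) (volume.restrict (Ici 0)) := by
    have hsq (x : ℝ) : ‖Pop T lm f x‖ ^ 2 =
        Real.exp (-lm * (x - cut T x)) ^ 2 * ‖f (cut T x)‖ ^ 2 := by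
      rw [Pop_apply, norm_smul, Real.norm_of_nonneg (Real.exp_nonneg _), mul_pow]
    simp_rw [hsq]
    exact (by fun_prop : Measurable fun x => Real.exp (-lm * (x - cut T x)) ^ 2)
      |>.aestronglyMeasurable.mul (hf.comp_quasiMeasurePreserving (quasiMeasurePreserving_cut hT))
  have hq := ENNReal.ofReal_lt_one.2 (exp_neg_two_mul_lt_one hT hl)
  rw [integral_eq_lintegral_of_nonneg_ae (ae_of_all _ fun _ => by positivity) hPop,
    integral_eq_lintegral_of_nonneg_ae (ae_of_all _ fun _ => by positivity) hf,
    lintegral_ofReal_norm_Pop_sq hT, ENNReal.toReal_mul, ENNReal.toReal_inv,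
    ENNReal.toReal_sub_of_le hq.le ENNReal.one_ne_top, ENNReal.toReal_one,
    ENNReal.toReal_ofReal (Real.exp_nonneg _), one_div]

end Projection

/-- `𝒫_𝒜` is a continuous linear projection with range `ran 𝒜`,
kernel `{f : f = 0 a.e. on [0,T)}`, operator norm `(1 - e^{-2λT})^{-1/2}`,
and `𝒫_𝒜 f = f` on `[0,T)`. -/
theorem stmt_4 (T lm : ℝ) (hT : 0 < T) (hl : 0 < lm) :
    -- linearity
    (∀ (c : ℂ) (f g : ℝ → ℂ),
      Pop T lm (fun x => c • f x + g x) = fun x => c • Pop T lm f x + Pop T lm g x) ∧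
    -- idempotence: 𝒫_𝒜² = 𝒫_𝒜
    (∀ (f : ℝ → ℂ) (x : ℝ), Pop T lm (Pop T lm f) x = Pop T lm f x) ∧
    -- 𝒫_𝒜 f = f on [0,T)
    (∀ (f : ℝ → ℂ), ∀ x ∈ Set.Ico 0 T, Pop T lm f x = f x) ∧
    -- the range of 𝒫_𝒜 is exactly ran 𝒜
    (∀ f : ℝ → ℂ, Pop T lm f = Aop T lm (fun y => Real.exp (lm * y) • f y)) ∧
    (∀ (f : ℝ → ℂ) (x : ℝ), Pop T lm (Aop T lm f) x = Aop T lm f x) ∧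
    -- the kernel of 𝒫_𝒜 is F = {f : f = 0 a.e. on [0,T)}
    (∀ f : ℝ → ℂ,
      ((Pop T lm f) =ᵐ[volume.restrict (Set.Ici (0:ℝ))] 0 ↔
        f =ᵐ[volume.restrict (Set.Ico 0 T)] 0)) ∧
    -- operator norm equals (1-e^{-2λT})^{-1/2}: the bound ...
    (∀ f : ℝ → ℂ, IntegrableOn (fun x => ‖f x‖ ^ 2) (Set.Ici 0) →
      (∫ x in Set.Ici (0:ℝ), ‖Pop T lm f x‖ ^ 2)
        ≤ (1 / (1 - Real.exp (-2 * lm * T))) * ∫ x in Set.Ici (0:ℝ), ‖f x‖ ^ 2) ∧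
    -- ... is attained on functions supported in [0,T)
    (∀ f : ℝ → ℂ, IntegrableOn (fun x => ‖f x‖ ^ 2) (Set.Ici 0) →
      (f =ᵐ[volume.restrict (Set.Ici T)] 0) →
      (∫ x in Set.Ici (0:ℝ), ‖Pop T lm f x‖ ^ 2)
        = (1 / (1 - Real.exp (-2 * lm * T))) * ∫ x in Set.Ici (0:ℝ), ‖f x‖ ^ 2) := by
  have hc : 0 ≤ 1 / (1 - Real.exp (-2 * lm * T)) :=
    one_div_nonneg.2 (sub_nonneg.2 (exp_neg_two_mul_lt_one hT hl).le)
  refine ⟨fun c f g => ?_, Pop_Pop hT, fun f _ => Pop_eq_self_of_mem hT f, fun _ => rfl,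
    Pop_Aop hT, Pop_ae_eq_zero_iff hT, fun f hf => ?_, fun f hf hsupp => ?_⟩
  · funext x
    simp only [Pop_apply, smul_add, smul_comm _ c]
  · rw [integral_norm_Pop_sq hT hl (hf.mono_set Ico_subset_Ici_self).aestronglyMeasurable]
    exact mul_le_mul_of_nonneg_left (setIntegral_mono_set hf
      (ae_of_all _ fun _ => by positivity) Ico_subset_Ici_self.eventuallyLE) hc
  · rw [integral_norm_Pop_sq hT hl (hf.mono_set Ico_subset_Ici_self).aestronglyMeasurable,
      setIntegral_eq_of_subset_of_ae_sdiff_eq_zero measurableSet_Ici.nullMeasurableSet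
        Ico_subset_Ici_self ?_]
    filter_upwards [(ae_restrict_iff' measurableSet_Ici).1 hsupp] with x hfx hx
    simp [hfx (not_lt.1 fun h => hx.2 ⟨hx.1, h⟩)]
end
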